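/- The constraint C ≡ (x = replaceall(y, a, z) ∧ x ∈ L(A₁) ∧ y ∈ L(A₂) ∧ z ∈ L(A₃)) is satisfiable if and only if there exists T ⊆ Q₁ × Q₁ such that L(A₃) ∩ ⋂_{(q,q')∈T} L(A₁(q,q')) ≠ ∅ and L(A₂) ∩ L(B_{A₁,a,T}) ≠ ∅. -/
import Mathlib


/-- A nondeterministic finite automaton `(Q, δ, q₀, F)` with states `σ` and
alphabet `A`: transition relation `δ ⊆ Q × A × Q`, initial state and final states. -/
structure NFA' (A σ : Type*) where
  trans : Set (σ × A × σ)
  start : σ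
  accept : Set σ

/-- `Steps δ q w q'`: the transition relation `δ` can read the word `w` going
from state `q` to state `q'`. -/
inductive Steps {A σ : Type*} (δ : Set (σ × A × σ)) : σ → List A → σ → Prop
  | nil (q : σ) : Steps δ q [] q
  | cons {q q' q'' : σ} {a : A} {w : List A} :
      (q, a, q') ∈ δ → Steps δ q' w q'' → Steps δ q (a :: w) q''

/-- The word `w` is accepted by the NFA `M`. -/
def NFA'.Accepts {A σ : Type*} (M : NFA' A σ) (w : List A) : Prop :=
  ∃ f ∈ M.accept, Steps M.trans M.start w f

/-- `B_{M,a,T}`: the NFA obtained from `M` by removing all `a`-transitions and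
adding the transitions `(q, a, q')` for each `(q, q') ∈ T`. -/
def modNFA {A σ : Type*} (M : NFA' A σ) (a : A) (T : Set (σ × σ)) : NFA' A σ :=
  { trans := {t | t ∈ M.trans ∧ t.2.1 ≠ a} ∪ {t | t.2.1 = a ∧ (t.1, t.2.2) ∈ T},
    start := M.start, accept := M.accept }

/-- `replaceAllChar a v u` replaces every occurrence of the letter `a` in `u` by `v`. -/
def replaceAllChar {A : Type*} [DecidableEq A] (a : A) (v : List A) : List A → List A
  | [] => []
  | b :: u => (if b = a then v else [b]) ++ replaceAllChar a v u

lemma Steps.append {A σ : Type*} {δ : Set (σ × A × σ)} {q m q' : σ} {w₁ w₂ : List A}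
    (h₁ : Steps δ q w₁ m) (h₂ : Steps δ m w₂ q') : Steps δ q (w₁ ++ w₂) q' := by
  induction h₁ with
  | nil => exact h₂
  | cons ht _ ih => exact Steps.cons ht (ih h₂)

lemma Steps.append_split {A σ : Type*} {δ : Set (σ × A × σ)} {q q' : σ} {w₂ : List A}
    (w₁ : List A) (h : Steps δ q (w₁ ++ w₂) q') :
    ∃ m, Steps δ q w₁ m ∧ Steps δ m w₂ q' := by
  induction w₁ generalizing q with
  | nil => exact ⟨q, Steps.nil q, h⟩
  | cons b u ih =>
    cases h with
    | cons ht hs =>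
      obtain ⟨m, hm1, hm2⟩ := ih hs
      exact ⟨m, Steps.cons ht hm1, hm2⟩

/-- The constraint `x = replaceall(y, a, z) ∧ x ∈ L(A₁) ∧ y ∈ L(A₂) ∧ z ∈ L(A₃)`
is satisfiable iff there exists `T ⊆ Q₁ × Q₁` such that
`L(A₃) ∩ ⋂_{(q,q')∈T} L(A₁(q,q')) ≠ ∅` and `L(A₂) ∩ L(B_{A₁,a,T}) ≠ ∅`. -/
theorem single_replaceall_sat_iff {A σ₁ σ₂ σ₃ : Type*} [DecidableEq A]
    (A₁ : NFA' A σ₁) (A₂ : NFA' A σ₂) (A₃ : NFA' A σ₃) (a : A) :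
    (∃ x y z : List A, x = replaceAllChar a z y ∧
        A₁.Accepts x ∧ A₂.Accepts y ∧ A₃.Accepts z) ↔
      ∃ T : Set (σ₁ × σ₁),
        (∃ w, A₃.Accepts w ∧ ∀ p ∈ T, Steps A₁.trans p.1 w p.2) ∧
        (∃ v, A₂.Accepts v ∧ (modNFA A₁ a T).Accepts v) := by
  constructor
  · rintro ⟨x, y, z, hx, ⟨f₁, hf₁, hs₁⟩, hy, hz⟩
    refine ⟨{p | Steps A₁.trans p.1 z p.2}, ⟨z, hz, fun p hp => hp⟩, y, hy, f₁, hf₁, ?_⟩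
    subst hx
    have key : ∀ (u : List A) (q q' : σ₁), Steps A₁.trans q (replaceAllChar a z u) q' →
        Steps (modNFA A₁ a {p | Steps A₁.trans p.1 z p.2}).trans q u q' := by
      intro u
      induction u with
      | nil => intro q q' h; cases h; exact Steps.nil _
      | cons b u ih =>
        intro q q' h
        simp only [replaceAllChar] at h
        obtain ⟨m, hm1, hm2⟩ := Steps.append_split _ h
        by_cases hb : b = a
        · subst hb
          rw [if_pos rfl] at hm1
          exact Steps.cons (Or.inr ⟨rfl, hm1⟩) (ih _ _ hm2)
        · rw [if_neg hb] at hm1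
          cases hm1 with
          | cons ht hs =>
            cases hs with
            | nil => exact Steps.cons (Or.inl ⟨ht, hb⟩) (ih _ _ hm2)
    exact key y _ _ hs₁
  · rintro ⟨T, ⟨w, hw, hT⟩, v, hv, f₁, hf₁, hs₁⟩
    refine ⟨replaceAllChar a w v, v, w, rfl, ⟨f₁, hf₁, ?_⟩, hv, hw⟩
    clear hf₁
    have key : ∀ (u : List A) (q q' : σ₁), Steps (modNFA A₁ a T).trans q u q' →
        Steps A₁.trans q (replaceAllChar a w u) q' := by
      intro u q q' h
      induction h with
      | nil q => exact Steps.nil q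
      | @cons q q' q'' b u ht _ ih =>
        simp only [replaceAllChar]
        cases ht with
        | inl h => rw [if_neg h.2]; exact Steps.cons h.1 ih
        | inr h =>
          obtain ⟨hba, hT'⟩ := h
          rw [if_pos hba]
          exact Steps.append (hT _ hT') ih
    exact key v _ _ hs₁
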